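/- Let G = (V, E) be a finite simple graph and let g be any k-algebra automorphism of the evolution algebra X(G) (a k-linear bijection of X(G) commuting with multiplication). Then there exists a graph automorphism σ of G such that g(b_v) = b_{σ(v)} for all v ∈ V and g(b_{{v,w}}) = b_{{σ(v),σ(w)}} for all {v,w} ∈ E; that is, g = X(σ). -/

import Mathlib

/-!
The squares `b_i * b_i` of the natural basis of `X(G)` are linearly independent, so a nonzero `x`
with `x * X(G) ⊆ k (x * x)` is a multiple of a single basis vector. Every `b_i` has this property,
hence an automorphism `g` sends `b_i` to `c_i b_{π i}` for a permutation `π`; since `b_i` occurs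
with coefficient `1` in `b_i * b_i`, comparing coefficients gives `c_i = 1`, so `g` permutes the
basis and preserves the structure constants. The vertices are the indices with `b_i * b_i = b_i`,
and `v ~ w` iff `v ≠ w` and some square involves both `b_v` and `b_w`. Both are read off the
structure constants, so `π` restricts to a graph automorphism `σ` that sends the edge `{v, w}` to
`{σ v, σ w}`.
-/

open scoped BigOperators

variable (k : Type*) [Field k]

section Defs

variable {V : Type*} [Fintype V] [DecidableEq V]

/-- The square `b i * b i` of the `i`-th natural basis vector of the evolution algebra
`X(G)` attached to a simple graph `G`: for a vertex `v`, `b_v * b_v = b_v`; for an edge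
`e = {v, w}`, `b_e * b_e = b_e + b_v + b_w`. -/
noncomputable def graphSq (G : SimpleGraph V) [DecidableRel G.Adj] :
    (V ⊕ ↥G.edgeSet) → (V ⊕ ↥G.edgeSet) → k
  | Sum.inl v => Pi.single (Sum.inl v) 1
  | Sum.inr e => Pi.single (Sum.inr e) 1 +
      ∑ v ∈ Finset.univ.filter (· ∈ (e : Sym2 V)), Pi.single (Sum.inl v) 1

/-- The multiplication of the evolution algebra `X(G)` attached to a simple graph `G`,
as a `k`-bilinear map on the space of functions `(V ⊕ G.edgeSet) → k`.  Distinct natural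
basis vectors multiply to zero, and the squares are given by `graphSq`. -/
noncomputable def graphMul (G : SimpleGraph V) [DecidableRel G.Adj] :
    ((V ⊕ ↥G.edgeSet) → k) →ₗ[k] ((V ⊕ ↥G.edgeSet) → k) →ₗ[k] ((V ⊕ ↥G.edgeSet) → k) :=
  LinearMap.mk₂ k (fun x y => ∑ i, (x i * y i) • graphSq k G i)
    (by intro x x' y; simp [add_mul, add_smul, Finset.sum_add_distrib])
    (by intro c x y; simp [Finset.smul_sum, smul_smul, mul_assoc])
    (by intro x y y'; simp [mul_add, add_smul, Finset.sum_add_distrib])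
    (by intro c x y; simp [Finset.smul_sum, smul_smul, mul_assoc, mul_left_comm])

end Defs

section Morphisms

variable {V₁ V₂ : Type*} [Fintype V₁] [DecidableEq V₁] [Fintype V₂] [DecidableEq V₂]

/-- The map induced on natural-basis index sets by a graph morphism `f : G₁ → G₂`:
a vertex `v` is sent to `f v` and an edge `{v, w}` to `{f v, f w}`. -/
def graphIdxMap (G₁ : SimpleGraph V₁) (G₂ : SimpleGraph V₂) (f : V₁ → V₂)
    (hf : ∀ ⦃v w : V₁⦄, G₁.Adj v w → G₂.Adj (f v) (f w)) :
    V₁ ⊕ ↥G₁.edgeSet → V₂ ⊕ ↥G₂.edgeSet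
  | Sum.inl v => Sum.inl (f v)
  | Sum.inr e => Sum.inr ⟨Sym2.map f (e : Sym2 V₁), by
      obtain ⟨s, hs⟩ := e
      induction s using Sym2.ind with
      | _ v w => simpa using hf (by simpa using hs)⟩

/-- The `k`-linear map `X(f) : X(G₁) → X(G₂)` induced by a graph morphism `f`, sending
each natural basis vector of `X(G₁)` to the corresponding natural basis vector of
`X(G₂)`. -/
noncomputable def graphXmap (G₁ : SimpleGraph V₁) (G₂ : SimpleGraph V₂)
    [DecidableRel G₁.Adj] [DecidableRel G₂.Adj] (f : V₁ → V₂)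
    (hf : ∀ ⦃v w : V₁⦄, G₁.Adj v w → G₂.Adj (f v) (f w)) :
    ((V₁ ⊕ ↥G₁.edgeSet) → k) →ₗ[k] ((V₂ ⊕ ↥G₂.edgeSet) → k) :=
  (Pi.basisFun k (V₁ ⊕ ↥G₁.edgeSet)).constr k fun i =>
    Pi.single (graphIdxMap G₁ G₂ f hf i) 1

end Morphisms

section EvolutionAlgebra

variable {k} {ι : Type*} [Fintype ι]

def evolutionMul (sq : ι → ι → k) (x y : ι → k) : ι → k :=
  ∑ i, (x i * y i) • sq i

variable [DecidableEq ι] {sq : ι → ι → k}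

lemma evolutionMul_single_left (i : ι) (y : ι → k) :
    evolutionMul sq (Pi.single i 1) y = y i • sq i := by
  rw [evolutionMul, Finset.sum_eq_single i (fun j _ hj => by simp [hj]) (by simp)]
  simp

lemma evolutionMul_single_single (i : ι) (a b : k) :
    evolutionMul sq (Pi.single i a) (Pi.single i b) = (a * b) • sq i := by
  rw [evolutionMul, Finset.sum_eq_single i (fun j _ hj => by simp [hj]) (by simp)]
  simp

lemma eq_single_of_forall_evolutionMul_mem_span (hsq : LinearIndependent k sq) {x : ι → k}
    (hx : ∀ y, ∃ c : k, evolutionMul sq x y = c • evolutionMul sq x x) {i : ι} (hi : x i ≠ 0) :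
    x = Pi.single i (x i) := by
  funext j
  by_cases hji : j = i
  · subst hji; simp
  obtain ⟨c, hc⟩ := hx (Pi.single j 1)
  have hcoeff : Pi.single j (x j) = c • (x * x) := by
    apply hsq.fintypeLinearCombination_injective
    simpa [Fintype.linearCombination_apply, evolutionMul, Pi.single_apply, Finset.smul_sum,
      smul_smul, mul_comm] using hc
  have hc0 : c = 0 := by
    simpa [Pi.single_apply, Ne.symm hji, hi] using congrFun hcoeff i
  simpa [hji, hc0] using congrFun hcoeff j

end EvolutionAlgebra

section EvolutionAlgebraAut

variable {k} {ι : Type*} [DecidableEq ι] {g : (ι → k) ≃ₗ[k] (ι → k)}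

lemma injective_of_apply_single_eq_single {π : ι → ι} {c : ι → k} (hc : ∀ i, c i ≠ 0)
    (hgπ : ∀ i, g (Pi.single i 1) = Pi.single (π i) (c i)) : Function.Injective π := by
  intro i j hij
  have h : g (c j • Pi.single i 1) = g (c i • Pi.single j 1) := by
    rw [map_smul, map_smul, hgπ, hgπ, hij, ← Pi.single_smul, ← Pi.single_smul, smul_eq_mul,
      smul_eq_mul, mul_comm]
  by_contra hne
  simpa [Pi.single_apply, hne, hc j] using congrFun (g.injective h) i

variable [Fintype ι] {sq : ι → ι → k}

lemma exists_apply_single_eq_single_of_map_evolutionMul (hsq : LinearIndependent k sq)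
    (hg : ∀ x y, g (evolutionMul sq x y) = evolutionMul sq (g x) (g y)) (i : ι) :
    ∃ j c, c ≠ 0 ∧ g (Pi.single i 1) = Pi.single j c := by
  have hne : g (Pi.single i 1) ≠ 0 := by simp
  obtain ⟨j, hj⟩ := Function.ne_iff.mp hne
  refine ⟨j, _, hj, eq_single_of_forall_evolutionMul_mem_span hsq (fun y => ⟨g.symm y i, ?_⟩) hj⟩
  calc evolutionMul sq (g (Pi.single i 1)) y
      = g (evolutionMul sq (Pi.single i 1) (g.symm y)) := by rw [hg, g.apply_symm_apply]
    _ = g.symm y i • g (evolutionMul sq (Pi.single i 1) (Pi.single i 1)) := by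
        rw [evolutionMul_single_left, evolutionMul_single_left, ← map_smul]; simp
    _ = g.symm y i • evolutionMul sq (g (Pi.single i 1)) (g (Pi.single i 1)) := by rw [hg]

lemma apply_perm_eq_of_apply_single_eq_single {π : Equiv.Perm ι} {c : ι → k}
    (hgπ : ∀ i, g (Pi.single i 1) = Pi.single (π i) (c i)) (x : ι → k) (i : ι) :
    g x (π i) = c i * x i := by
  conv_lhs => rw [pi_eq_sum_univ' x]
  simp [hgπ, Pi.single_apply, π.injective.eq_iff, mul_comm]

lemma exists_perm_of_map_evolutionMul (hsq : LinearIndependent k sq) (hdiag : ∀ i, sq i i = 1)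
    (hg : ∀ x y, g (evolutionMul sq x y) = evolutionMul sq (g x) (g y)) :
    ∃ π : Equiv.Perm ι, (∀ i, g (Pi.single i 1) = Pi.single (π i) 1) ∧
      ∀ i j, sq (π i) (π j) = sq i j := by
  choose π c hc hgπ using exists_apply_single_eq_single_of_map_evolutionMul hsq hg
  let π' : Equiv.Perm ι := Equiv.ofBijective π
    (Finite.injective_iff_bijective.mp (injective_of_apply_single_eq_single hc hgπ))
  have hsq_map : ∀ i, g (sq i) = (c i * c i) • sq (π i) := fun i => by
    simpa [evolutionMul_single_single, hgπ] using hg (Pi.single i 1) (Pi.single i 1)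
  have hc1 : ∀ i, c i = 1 := fun i => by
    have h := apply_perm_eq_of_apply_single_eq_single (π := π') hgπ (sq i) i
    simp only [hsq_map, Pi.smul_apply, π', Equiv.ofBijective_apply, hdiag, smul_eq_mul,
      mul_one] at h
    exact (mul_right_eq_self₀.mp h).resolve_right (hc i)
  refine ⟨π', fun i => by simp [π', hgπ, hc1], fun i j => ?_⟩
  have h := apply_perm_eq_of_apply_single_eq_single (π := π') hgπ (sq i) j
  simpa [hsq_map, hc1, π'] using h

end EvolutionAlgebraAut

section GraphSq

variable {V : Type*} [Fintype V] [DecidableEq V] {G : SimpleGraph V} [DecidableRel G.Adj]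

lemma graphMul_eq_evolutionMul (x y : V ⊕ G.edgeSet → k) :
    graphMul k G x y = evolutionMul (graphSq k G) x y := rfl

lemma graphSq_apply_inr (i : V ⊕ G.edgeSet) (f : G.edgeSet) :
    graphSq k G i (.inr f) = if i = .inr f then 1 else 0 := by
  cases i <;> simp [graphSq, Finset.sum_apply, Pi.single_apply, eq_comm]

lemma graphSq_inr_apply_inl (e : G.edgeSet) (u : V) :
    graphSq k G (.inr e) (.inl u) = if u ∈ (e : Sym2 V) then 1 else 0 := by
  simp [graphSq, Finset.sum_apply, Pi.single_apply]

lemma graphSq_self (i : V ⊕ G.edgeSet) : graphSq k G i i = 1 := by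
  cases i <;> simp [graphSq]

-- the matrix `graphSq` is unitriangular once edges are listed before vertices
lemma linearIndependent_graphSq : LinearIndependent k (graphSq k G) := by
  rw [Fintype.linearIndependent_iff]
  intro c hc
  have hedge : ∀ e, c (.inr e) = 0 := fun e => by
    simpa [Finset.sum_apply, graphSq_apply_inr] using congrFun hc (.inr e)
  rintro (v | e)
  · simpa [Finset.sum_apply, Fintype.sum_sum_type, hedge, graphSq, Pi.single_apply]
      using congrFun hc (.inl v)
  · exact hedge e

lemma isLeft_iff_forall_graphSq_ne_zero (i : V ⊕ G.edgeSet) :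
    i.isLeft ↔ ∀ j, graphSq k G i j ≠ 0 → j = i := by
  rcases i with v | e
  · simp [graphSq, Pi.single_apply]
  · simp only [Sum.isLeft_inr, Bool.false_eq_true, false_iff, not_forall]
    exact ⟨.inl e.1.out.1, by simp [graphSq_inr_apply_inl, Sym2.out_fst_mem], Sum.inl_ne_inr⟩

lemma adj_iff_exists_graphSq_ne_zero (a b : V) :
    G.Adj a b ↔ a ≠ b ∧ ∃ i, graphSq k G i (.inl a) ≠ 0 ∧ graphSq k G i (.inl b) ≠ 0 := by
  refine ⟨fun h => ⟨h.ne, .inr ⟨s(a, b), h⟩, by simp [graphSq_inr_apply_inl]⟩, ?_⟩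
  rintro ⟨hab, v | e, ha, hb⟩
  · simp [graphSq, Pi.single_apply] at ha hb
    exact absurd (ha.trans hb.symm) hab
  · simp only [graphSq_inr_apply_inl, ne_eq, ite_eq_right_iff, one_ne_zero, imp_false,
      not_not] at ha hb
    simpa [(Sym2.mem_and_mem_iff hab).mp ⟨ha, hb⟩] using e.2

lemma exists_iso_of_graphSq_perm {π : Equiv.Perm (V ⊕ G.edgeSet)}
    (hπ : ∀ i j, graphSq k G (π i) (π j) = graphSq k G i j) :
    ∃ σ : G ≃g G, ∀ i, π i = graphIdxMap G G σ (fun _ _ h => σ.map_rel_iff.mpr h) i := by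
  have hleft : ∀ i, (π i).isLeft ↔ i.isLeft := fun i => by
    rw [isLeft_iff_forall_graphSq_ne_zero k, isLeft_iff_forall_graphSq_ne_zero k]
    exact (π.forall_congr fun j => by rw [hπ, π.injective.eq_iff]).symm
  have hvert : ∀ v, ∃ w, π (.inl v) = .inl w := fun v => Sum.isLeft_iff.mp ((hleft _).mpr rfl)
  choose σ₀ hσ₀ using hvert
  have hinj : Function.Injective σ₀ := fun a b h =>
    Sum.inl_injective (π.injective (by rw [hσ₀, hσ₀, h]))
  have hadj : ∀ {a b}, G.Adj (σ₀ a) (σ₀ b) ↔ G.Adj a b := fun {a b} => by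
    rw [adj_iff_exists_graphSq_ne_zero k, adj_iff_exists_graphSq_ne_zero k, hinj.ne_iff,
      ← hσ₀, ← hσ₀]
    exact and_congr_right fun _ => (π.exists_congr fun i => by rw [hπ, hπ]).symm
  refine ⟨⟨Equiv.ofBijective σ₀ (Finite.injective_iff_bijective.mp hinj), hadj⟩, ?_⟩
  rintro (v | ⟨e, he⟩)
  · exact hσ₀ v
  induction e using Sym2.ind with | _ a b => ?_
  obtain ⟨f, hf⟩ : ∃ f, π (.inr ⟨s(a, b), he⟩) = .inr f :=
    Sum.isRight_iff.mp (by simpa using hleft (.inr ⟨s(a, b), he⟩))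
  have hmem : ∀ u ∈ s(a, b), σ₀ u ∈ (f : Sym2 V) := fun u hu => by
    have h := hπ (.inr ⟨s(a, b), he⟩) (.inl u)
    rw [hf, hσ₀] at h
    simpa [graphSq_inr_apply_inl, hu] using h
  have hf_eq : (f : Sym2 V) = s(σ₀ a, σ₀ b) :=
    (Sym2.mem_and_mem_iff (hinj.ne (G.ne_of_adj he))).mp ⟨hmem a (by simp), hmem b (by simp)⟩
  rw [hf]
  exact congrArg Sum.inr (Subtype.ext hf_eq)

end GraphSq

/-- Every `k`-algebra automorphism `g` of the evolution algebra `X(G)` of a finite simple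
graph `G` (a `k`-linear bijection commuting with the multiplication) is induced by a graph
automorphism `σ` of `G`: it permutes the vertex basis vectors and the edge basis vectors
according to `σ`; in particular `g = X(σ)`. -/
theorem graphEvolutionAlgebra_aut_induced {V : Type*} [Fintype V] [DecidableEq V]
    (G : SimpleGraph V) [DecidableRel G.Adj]
    (g : ((V ⊕ ↥G.edgeSet) → k) ≃ₗ[k] ((V ⊕ ↥G.edgeSet) → k))
    (hg : ∀ x y : (V ⊕ ↥G.edgeSet) → k,
        g (graphMul k G x y) = graphMul k G (g x) (g y)) :
    ∃ σ : G ≃g G,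
      (∀ v : V, g (Pi.single (Sum.inl v) 1) = Pi.single (Sum.inl (σ v)) 1) ∧
      (∀ e : ↥G.edgeSet,
        g (Pi.single (Sum.inr e) 1) = Pi.single (Sum.inr (σ.mapEdgeSet e)) 1) ∧
      g.toLinearMap = graphXmap k G G σ (fun _ _ h => σ.map_rel_iff.mpr h) := by
  simp only [graphMul_eq_evolutionMul] at hg
  obtain ⟨π, hgπ, hπ⟩ :=
    exists_perm_of_map_evolutionMul (linearIndependent_graphSq k) (graphSq_self k) hg
  obtain ⟨σ, hσ⟩ := exists_iso_of_graphSq_perm k hπ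
  have hbasis : ∀ i, g (Pi.single i 1) = Pi.single (graphIdxMap G G σ _ i) 1 := fun i => by
    rw [hgπ, hσ]
  refine ⟨σ, fun v => hbasis (.inl v), fun e => hbasis (.inr e), ?_⟩
  exact (Pi.basisFun k _).ext fun i => by simp [graphXmap, hbasis]
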